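/- Let U = I × J with I, J ⊆ ℝ open intervals, let a : J → ℝ and b : U → ℝ be smooth, and let D be the connection on U whose only nonzero Christoffel symbols are Γ¹_{12} = Γ¹_{21} = a(x²) and Γ¹_{22} = b(x¹,x²). Suppose h : U → ℝ is smooth of the form h(x¹,x²) = h̃(x²) + x¹ ĥ(x²) with h̃, ĥ : J → ℝ smooth and ĥ(x²) ≠ 0 for all x² ∈ J, and h satisfies the affine gradient Ricci soliton equation Hes_h(∂_i,∂_j) + 2ρ^{sym}_{ij} = 0 on U. Then there exist smooth functions α, β : J → ℝ such that b(x¹,x²) = (2 α(x²)/ĥ(x²)) e^{ĥ(x²) x¹ / 2} + β(x²) + x¹ (a(x²)² + a'(x²)) and h̃''(x²) = ĥ(x²) β(x²) on U. -/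

import Mathlib

noncomputable section

/-- Points of the affine surface (local coordinates `(x¹,x²)`). -/
abbrev Pt2 := Fin 2 → ℝ

/-- Partial derivative `∂_{x^i}`. -/
def pd2 (i : Fin 2) (f : Pt2 → ℝ) (p : Pt2) : ℝ :=
  fderiv ℝ f p (Pi.single i 1)

/-- The Ricci tensor `ρ_{ij}` of the affine connection with Christoffel symbols `Γ^k_{ij}`:
`ρ_{ij} = Σ_k ∂_{x^k}Γ^k_{ij} − ∂_{x^i}(Σ_k Γ^k_{kj}) + Σ_{k,l}(Γ^k_{kl}Γ^l_{ij} − Γ^k_{il}Γ^l_{kj})`. -/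
def ricciD (Γ : Fin 2 → Fin 2 → Fin 2 → Pt2 → ℝ) (i j : Fin 2) (p : Pt2) : ℝ :=
  (∑ k : Fin 2, pd2 k (Γ k i j) p) - pd2 i (fun q => ∑ k : Fin 2, Γ k k j q) p
    + ∑ k : Fin 2, ∑ l : Fin 2, (Γ k k l p * Γ l i j p - Γ k i l p * Γ l k j p)

/-- The symmetric part `ρ^{sym}_{ij} = ½(ρ_{ij}+ρ_{ji})` of the Ricci tensor. -/
def ricciDSym (Γ : Fin 2 → Fin 2 → Fin 2 → Pt2 → ℝ) (i j : Fin 2) (p : Pt2) : ℝ :=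
  (ricciD Γ i j p + ricciD Γ j i p) / 2

/-- The affine Hessian `Hes_h(∂_i,∂_j) = ∂_i∂_j h − Σ_k Γ^k_{ij} ∂_k h`. -/
def hessD (Γ : Fin 2 → Fin 2 → Fin 2 → Pt2 → ℝ) (h : Pt2 → ℝ) (i j : Fin 2) (p : Pt2) : ℝ :=
  pd2 i (pd2 j h) p - ∑ k : Fin 2, Γ k i j p * pd2 k h p

/-- The covariant derivative of the Ricci tensor:
`(D_{∂_i}ρ)_{jk} = ∂_i ρ_{jk} − Σ_l Γ^l_{ij} ρ_{lk} − Σ_l Γ^l_{ik} ρ_{jl}`. -/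
def covRicciD (Γ : Fin 2 → Fin 2 → Fin 2 → Pt2 → ℝ) (i j k : Fin 2) (p : Pt2) : ℝ :=
  pd2 i (fun q => ricciD Γ j k q) p - (∑ l : Fin 2, Γ l i j p * ricciD Γ l k p)
    - ∑ l : Fin 2, Γ l i k p * ricciD Γ j l p

/-- The connection whose only nonzero Christoffel symbols are
`Γ¹_{12} = Γ¹_{21} = a(x²)` and `Γ¹_{22} = b(x¹,x²)`
(symmetric rank-one Ricci tensor with parallel kernel). -/
def ΓK (a : ℝ → ℝ) (b : Pt2 → ℝ) : Fin 2 → Fin 2 → Fin 2 → Pt2 → ℝ := fun k i j x =>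
  if k = 0 ∧ ((i = 0 ∧ j = 1) ∨ (i = 1 ∧ j = 0)) then a (x 1)
  else if k = 0 ∧ i = 1 ∧ j = 1 then b x
  else 0

section AuxStmt18

lemma pd2_zero_fun (k : Fin 2) (p : Pt2) : pd2 k (fun _ => (0:ℝ)) p = 0 := by
  simp [pd2]

lemma pd2_congr {f g : Pt2 → ℝ} {p : Pt2} (hfg : f =ᶠ[nhds p] g) (k : Fin 2) :
    pd2 k f p = pd2 k g p := by
  unfold pd2; rw [hfg.fderiv_eq]

lemma pd2_comp1 {g : ℝ → ℝ} {p : Pt2} (hg : DifferentiableAt ℝ g (p 1)) (k : Fin 2) :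
    pd2 k (fun x => g (x 1)) p = if k = 1 then deriv g (p 1) else 0 := by
  have hproj : HasFDerivAt (fun x : Pt2 => x 1)
      (ContinuousLinearMap.proj 1 : Pt2 →L[ℝ] ℝ) p :=
    (ContinuousLinearMap.proj 1 : Pt2 →L[ℝ] ℝ).hasFDerivAt
  have h1 := (hg.hasDerivAt.hasFDerivAt).comp p hproj
  simp only [Function.comp_def] at h1
  unfold pd2
  rw [h1.fderiv]
  fin_cases k <;> simp [Pi.single_apply]

lemma pd2_affine {u v : ℝ → ℝ} {p : Pt2} (hu : DifferentiableAt ℝ u (p 1))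
    (hv : DifferentiableAt ℝ v (p 1)) (k : Fin 2) :
    pd2 k (fun x => u (x 1) + x 0 * v (x 1)) p =
      if k = 1 then deriv u (p 1) + p 0 * deriv v (p 1) else v (p 1) := by
  have hproj1 : HasFDerivAt (fun x : Pt2 => x 1)
      (ContinuousLinearMap.proj 1 : Pt2 →L[ℝ] ℝ) p :=
    (ContinuousLinearMap.proj 1 : Pt2 →L[ℝ] ℝ).hasFDerivAt
  have hproj0 : HasFDerivAt (fun x : Pt2 => x 0)
      (ContinuousLinearMap.proj 0 : Pt2 →L[ℝ] ℝ) p :=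
    (ContinuousLinearMap.proj 0 : Pt2 →L[ℝ] ℝ).hasFDerivAt
  have hu1 := (hu.hasDerivAt.hasFDerivAt).comp p hproj1
  have hv1 := (hv.hasDerivAt.hasFDerivAt).comp p hproj1
  have hF := hu1.add (hproj0.mul hv1)
  simp only [Function.comp_def] at hF
  unfold pd2
  rw [show (fun x : Pt2 => u (x 1) + x 0 * v (x 1)) = ((fun x => u (x 1)) + (fun x => x 0) * fun x => v (x 1)) from rfl, hF.fderiv]
  fin_cases k <;> simp [Pi.single_apply] <;> ring

variable {a : ℝ → ℝ} {b : Pt2 → ℝ}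

lemma ΓK001 : ΓK a b 0 0 1 = fun x => a (x 1) := by funext x; simp [ΓK]
lemma ΓK010 : ΓK a b 0 1 0 = fun x => a (x 1) := by funext x; simp [ΓK]
lemma ΓK011 : ΓK a b 0 1 1 = b := by funext x; simp [ΓK]
lemma ΓK000 : ΓK a b 0 0 0 = fun _ => 0 := by funext x; simp [ΓK]
lemma ΓK1 (i j : Fin 2) : ΓK a b 1 i j = fun _ => 0 := by funext x; simp [ΓK]

lemma sumΓ0 : (fun q => ∑ k : Fin 2, ΓK a b k k 0 q) = fun _ => 0 := by
  funext q; simp [ΓK, Fin.sum_univ_two]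
lemma sumΓ1 : (fun q => ∑ k : Fin 2, ΓK a b k k 1 q) = fun q => a (q 1) := by
  funext q; simp [ΓK, Fin.sum_univ_two]

lemma ricci01 {p : Pt2} (ha : DifferentiableAt ℝ a (p 1)) :
    ricciD (ΓK a b) 0 1 p = 0 := by
  unfold ricciD
  rw [sumΓ1]
  simp only [Fin.sum_univ_two, ΓK001, ΓK1]
  rw [pd2_comp1 ha, pd2_zero_fun]
  simp [ΓK]

lemma ricci10 {p : Pt2} (ha : DifferentiableAt ℝ a (p 1)) :
    ricciD (ΓK a b) 1 0 p = 0 := by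
  unfold ricciD
  rw [sumΓ0]
  simp only [Fin.sum_univ_two, ΓK010, ΓK1]
  rw [pd2_comp1 ha, pd2_zero_fun]
  simp [ΓK]

lemma ricci11 {p : Pt2} (ha : DifferentiableAt ℝ a (p 1)) :
    ricciD (ΓK a b) 1 1 p = pd2 0 b p - deriv a (p 1) - (a (p 1))^2 := by
  unfold ricciD
  rw [sumΓ1]
  simp only [Fin.sum_univ_two, ΓK011, ΓK1]
  rw [pd2_zero_fun, pd2_comp1 ha]
  simp [ΓK]
  ring

lemma hess01eval {h : Pt2 → ℝ} {p : Pt2} :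
    hessD (ΓK a b) h 0 1 p =
      pd2 0 (pd2 1 h) p - a (p 1) * pd2 0 h p := by
  unfold hessD
  simp [Fin.sum_univ_two, ΓK]

lemma hess11eval {h : Pt2 → ℝ} {p : Pt2} :
    hessD (ΓK a b) h 1 1 p =
      pd2 1 (pd2 1 h) p - b p * pd2 0 h p := by
  unfold hessD
  simp [Fin.sum_univ_two, ΓK]

end AuxStmt18

/-- On `U = I × J`, for the connection with only nonzero Christoffel
symbols `Γ¹_{12} = Γ¹_{21} = a(x²)`, `Γ¹_{22} = b(x¹,x²)`, if
`h = h̃(x²) + x¹ĥ(x²)` with `ĥ` nowhere zero is an affine gradient Ricci soliton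
potential, then there are smooth `α, β` on `J` with
`b = (2α/ĥ) e^{ĥx¹/2} + β + x¹(a² + a')` and `h̃'' = ĥ β`. -/
theorem stmt18 (I J : Set ℝ) (hI : IsOpen I) (hIint : I.OrdConnected)
    (hJ : IsOpen J) (hJint : J.OrdConnected)
    (U : Set Pt2) (hUdef : U = {x : Pt2 | x 0 ∈ I ∧ x 1 ∈ J})
    (a : ℝ → ℝ) (ha : ContDiffOn ℝ (⊤ : ℕ∞) a J)
    (b : Pt2 → ℝ) (hb : ContDiffOn ℝ (⊤ : ℕ∞) b U)
    (ht hhat : ℝ → ℝ) (hht : ContDiffOn ℝ (⊤ : ℕ∞) ht J) (hhhat : ContDiffOn ℝ (⊤ : ℕ∞) hhat J)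
    (hne : ∀ y ∈ J, hhat y ≠ 0)
    (h : Pt2 → ℝ) (hdef : ∀ x ∈ U, h x = ht (x 1) + x 0 * hhat (x 1))
    (hhsm : ContDiffOn ℝ (⊤ : ℕ∞) h U)
    (hsol : ∀ x ∈ U, ∀ i j : Fin 2,
      hessD (ΓK a b) h i j x + 2 * ricciDSym (ΓK a b) i j x = 0) :
    ∃ α β : ℝ → ℝ, ContDiffOn ℝ (⊤ : ℕ∞) α J ∧ ContDiffOn ℝ (⊤ : ℕ∞) β J ∧
      (∀ x ∈ U, b x = (2 * α (x 1) / hhat (x 1)) * Real.exp (hhat (x 1) * x 0 / 2)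
        + β (x 1) + x 0 * ((a (x 1)) ^ 2 + deriv a (x 1))) ∧
      (∀ y ∈ J, deriv (deriv ht) y = hhat y * β y) := by
  classical
  have hUopen : IsOpen U := by
    rw [hUdef]
    exact (hI.preimage (continuous_apply 0)).inter (hJ.preimage (continuous_apply 1))
  have dAtJ : ∀ (f : ℝ → ℝ), ContDiffOn ℝ (⊤ : ℕ∞) f J → ∀ y ∈ J, DifferentiableAt ℝ f y :=
    fun f hf y hy => (hf.contDiffAt (hJ.mem_nhds hy)).differentiableAt (by simp)
  have hht1 : ContDiffOn ℝ (⊤ : ℕ∞) (deriv ht) J := hht.deriv_of_isOpen hJ (by simp)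
  have hht2 : ContDiffOn ℝ (⊤ : ℕ∞) (deriv (deriv ht)) J := hht1.deriv_of_isOpen hJ (by simp)
  have hhhat1 : ContDiffOn ℝ (⊤ : ℕ∞) (deriv hhat) J := hhhat.deriv_of_isOpen hJ (by simp)
  have ha1 : ContDiffOn ℝ (⊤ : ℕ∞) (deriv a) J := ha.deriv_of_isOpen hJ (by simp)
  set β : ℝ → ℝ := fun y => deriv (deriv ht) y / hhat y with hβdef
  have hβs : ContDiffOn ℝ (⊤ : ℕ∞) β J := hht2.div hhhat hne
  have hβ2 : ∀ y ∈ J, deriv (deriv ht) y = hhat y * β y := by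
    intro y hy
    rw [hβdef]
    field_simp [hne y hy]
  by_cases hIne : ∃ t, t ∈ I
  swap
  · refine ⟨fun _ => 0, β, contDiffOn_const, hβs, ?_, hβ2⟩
    intro x hx
    rw [hUdef] at hx
    exact absurd ⟨x 0, hx.1⟩ hIne
  obtain ⟨x₀, hx₀⟩ := hIne
  set c : ℝ → ℝ → Pt2 := fun s t i => if i = 0 then s else t with hcdef
  have hc0 : ∀ s t, c s t 0 = s := fun s t => by simp [hcdef]
  have hc1 : ∀ s t, c s t 1 = t := fun s t => by simp [hcdef]
  have hmemU : ∀ {s t : ℝ}, s ∈ I → t ∈ J → c s t ∈ U := by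
    intro s t hs ht'
    rw [hUdef]
    exact ⟨by rw [hc0]; exact hs, by rw [hc1]; exact ht'⟩
  have hmem' : ∀ x ∈ U, x 0 ∈ I ∧ x 1 ∈ J := by intro x hx; rw [hUdef] at hx; exact hx
  have hbd : ∀ p ∈ U, DifferentiableAt ℝ b p :=
    fun p hp => (hb.contDiffAt (hUopen.mem_nhds hp)).differentiableAt (by simp)
  have hph : ∀ p ∈ U, (pd2 0 h p = hhat (p 1)) ∧
      (pd2 1 h p = deriv ht (p 1) + p 0 * deriv hhat (p 1)) := by
    intro p hp
    have hev : h =ᶠ[nhds p] fun x => ht (x 1) + x 0 * hhat (x 1) :=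
      Filter.eventuallyEq_of_mem (hUopen.mem_nhds hp) hdef
    have hp1 := (hmem' p hp).2
    constructor
    · rw [pd2_congr hev 0, pd2_affine (dAtJ ht hht _ hp1) (dAtJ hhat hhhat _ hp1) 0]
      simp
    · rw [pd2_congr hev 1, pd2_affine (dAtJ ht hht _ hp1) (dAtJ hhat hhhat _ hp1) 1]
      simp
  have hpph : ∀ p ∈ U, (pd2 0 (pd2 1 h) p = deriv hhat (p 1)) ∧
      (pd2 1 (pd2 1 h) p
        = deriv (deriv ht) (p 1) + p 0 * deriv (deriv hhat) (p 1)) := by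
    intro p hp
    have hp1 := (hmem' p hp).2
    have hev : pd2 1 h =ᶠ[nhds p] fun q => deriv ht (q 1) + q 0 * deriv hhat (q 1) :=
      Filter.eventuallyEq_of_mem (hUopen.mem_nhds hp) (fun q hq => ((hph q hq).2))
    constructor
    · rw [pd2_congr hev 0,
        pd2_affine (dAtJ _ hht1 _ hp1) (dAtJ _ hhhat1 _ hp1) 0]
      simp
    · rw [pd2_congr hev 1,
        pd2_affine (dAtJ _ hht1 _ hp1) (dAtJ _ hhhat1 _ hp1) 1]
      simp
  have heq01 : ∀ y ∈ J, deriv hhat y = a y * hhat y := by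
    intro y hy
    have hpU := hmemU hx₀ hy
    have hay : DifferentiableAt ℝ a ((c x₀ y) 1) := by
      rw [hc1]; exact dAtJ a ha y hy
    have h1 := hsol _ hpU 0 1
    rw [hess01eval, ricciDSym, ricci01 hay, ricci10 hay, (hph _ hpU).1,
      (hpph _ hpU).1, hc1] at h1
    linarith
  have hdd2 : ∀ y ∈ J, deriv (deriv hhat) y = ((a y)^2 + deriv a y) * hhat y := by
    intro y hy
    have hev : deriv hhat =ᶠ[nhds y] fun z => a z * hhat z :=
      Filter.eventuallyEq_of_mem (hJ.mem_nhds hy) heq01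
    rw [hev.deriv_eq, deriv_fun_mul (dAtJ a ha y hy) (dAtJ hhat hhhat y hy), heq01 y hy]
    ring
  set G : ℝ → ℝ → ℝ := fun y t =>
    (b (c t y) - β y - t * ((a y)^2 + deriv a y)) * Real.exp (-(hhat y * t) / 2) with hGdef
  have hcurve : ∀ (y t : ℝ), HasDerivAt (fun s => c s y) (Pi.single 0 1 : Pt2) t := by
    intro y t
    have hfun : (fun s => c s y) = fun s : ℝ => s • (Pi.single 0 1 : Pt2) + c 0 y := by
      funext s
      funext i
      fin_cases i <;> simp [hcdef, Pi.single_apply]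
    rw [hfun]
    simpa using ((hasDerivAt_id t).smul_const (Pi.single 0 1 : Pt2)).add_const (c 0 y)
  have hGd : ∀ y ∈ J, ∀ t ∈ I, HasDerivAt (G y) 0 t := by
    intro y hy t htI
    have hpU : c t y ∈ U := hmemU htI hy
    have hbt : HasDerivAt (fun s => b (c s y)) (pd2 0 b (c t y)) t :=
      (hbd _ hpU).hasFDerivAt.comp_hasDerivAt t (hcurve y t)
    have hexp : HasDerivAt (fun s : ℝ => Real.exp (-(hhat y * s) / 2))
        (Real.exp (-(hhat y * t) / 2) * (-(hhat y) / 2)) t := by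
      have h1 : HasDerivAt (fun s : ℝ => -(hhat y * s) / 2) (-(hhat y) / 2) t := by
        simpa using (((hasDerivAt_id t).const_mul (hhat y)).neg.div_const 2)
      exact h1.exp
    have hf1 : HasDerivAt (fun s => b (c s y) - β y - s * ((a y)^2 + deriv a y))
        (pd2 0 b (c t y) - ((a y)^2 + deriv a y)) t :=
      (hbt.sub_const (β y)).sub (hasDerivAt_mul_const _)
    have hD := hf1.mul hexp
    have hay : DifferentiableAt ℝ a ((c t y) 1) := by
      rw [hc1]; exact dAtJ a ha y hy
    have h2 := hsol (c t y) hpU 1 1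
    rw [hess11eval, ricciDSym, ricci11 hay, (hph _ hpU).1, (hpph _ hpU).2,
      hc1, hc0] at h2
    rw [hβ2 y hy, hdd2 y hy] at h2
    have hval : (pd2 0 b (c t y) - ((a y)^2 + deriv a y)) * Real.exp (-(hhat y * t) / 2)
        + (b (c t y) - β y - t * ((a y)^2 + deriv a y))
          * (Real.exp (-(hhat y * t) / 2) * (-(hhat y) / 2)) = 0 := by
      linear_combination (Real.exp (-(hhat y * t) / 2) / 2) * h2
    rw [show (0:ℝ) = (pd2 0 b (c t y) - ((a y)^2 + deriv a y)) * Real.exp (-(hhat y * t) / 2)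
        + (b (c t y) - β y - t * ((a y)^2 + deriv a y))
          * (Real.exp (-(hhat y * t) / 2) * (-(hhat y) / 2)) from hval.symm]
    exact hD
  have hconv : Convex ℝ I := convex_iff_ordConnected.mpr hIint
  have hGconst : ∀ y ∈ J, ∀ t ∈ I, G y t = G y x₀ := by
    intro y hy t htI
    exact hconv.is_const_of_fderivWithin_eq_zero
      (fun s hs => ((hGd y hy s hs).differentiableAt).differentiableWithinAt)
      (fun s hs => by
        have hfw := ((hGd y hy s hs).hasFDerivAt.hasFDerivWithinAt).fderivWithin
          (hI.uniqueDiffWithinAt hs)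
        rw [hfw]; ext z; simp) htI hx₀
  set α : ℝ → ℝ := fun y => hhat y / 2 * G y x₀ with hαdef
  have hcs : ContDiff ℝ (⊤ : ℕ∞) (fun y : ℝ => c x₀ y) := by
    apply contDiff_pi.mpr
    intro i
    fin_cases i
    · simp only [hcdef]
      simpa using contDiff_const
    · simp only [hcdef]
      simp; exact contDiff_id
  have hbc : ContDiffOn ℝ (⊤ : ℕ∞) (fun y => b (c x₀ y)) J :=
    hb.comp hcs.contDiffOn (fun y hy => hmemU hx₀ hy)
  have hKs : ContDiffOn ℝ (⊤ : ℕ∞) (fun y => (a y)^2 + deriv a y) J := (ha.pow 2).add ha1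
  have hexps : ContDiffOn ℝ (⊤ : ℕ∞) (fun y => Real.exp (-(hhat y * x₀) / 2)) J :=
    Real.contDiff_exp.comp_contDiffOn (((hhhat.mul contDiffOn_const).neg).div_const 2)
  have hαs : ContDiffOn ℝ (⊤ : ℕ∞) α J := by
    rw [hαdef, hGdef]
    exact (hhhat.div_const 2).mul
      (((hbc.sub hβs).sub (contDiffOn_const.mul hKs)).mul hexps)
  refine ⟨α, β, hαs, hβs, ?_, hβ2⟩
  intro x hx
  obtain ⟨hx0, hx1⟩ := hmem' x hx
  have hxc : c (x 0) (x 1) = x := by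
    funext i
    fin_cases i <;> simp [hcdef]
  have hGx : G (x 1) (x 0) = (b x - β (x 1) - x 0 * ((a (x 1))^2 + deriv a (x 1)))
      * Real.exp (-(hhat (x 1) * x 0) / 2) := by
    simp only [hGdef]
    rw [hxc]
  have key : (b x - β (x 1) - x 0 * ((a (x 1))^2 + deriv a (x 1)))
      * Real.exp (-(hhat (x 1) * x 0) / 2) = G (x 1) x₀ := by
    rw [← hGx]; exact hGconst (x 1) hx1 (x 0) hx0
  have hα2 : 2 * α (x 1) / hhat (x 1) = G (x 1) x₀ := by
    rw [hαdef]
    field_simp [hne _ hx1]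
  have hmul : Real.exp (-(hhat (x 1) * x 0) / 2) * Real.exp (hhat (x 1) * x 0 / 2) = 1 := by
    rw [← Real.exp_add, show -(hhat (x 1) * x 0) / 2 + hhat (x 1) * x 0 / 2 = 0 by ring,
      Real.exp_zero]
  rw [hα2]
  linear_combination Real.exp (hhat (x 1) * x 0 / 2) * key
    - (b x - β (x 1) - x 0 * ((a (x 1))^2 + deriv a (x 1))) * hmul

end
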